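/- Let w₁,…,w_k ∈ A* with N = max |wⱼ|. Suppose there exist: a word v ∈ A^N; a word u₀ ∈ A* such that v·u₀ ∈ WMIX(w₁,…,w_k); and a nonempty word p and position such that v·u₀ can be written v·u₀ = x·y with suff_N(x) = suff_N(x·p) and the occurrence-count contribution vector of the pumped segment is balanced, i.e., for all j, j', the number of occurrences of w_j ending inside each inserted copy of p equals that of w_{j'}. Then WMIX(w₁,…,w_k) is infinite. More concretely: if there exist words x, p, y with p nonempty, x·y ∈ WMIX(w₁,…,w_k), |x| ≥ N, suff_N(x·p) = suff_N(x), and |x·p·y|_{w_j} − |x·y|_{w_j} is the same for all j, then x·p^n·y ∈ WMIX(w₁,…,w_k) for all n ≥ 0, hence WMIX(w₁,…,w_k) is infinite. -/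

import Mathlib

/-!
Counting occurrences of a word `u` is local: an occurrence of `u` in `c ++ s ++ t` with
`|u| ≤ |s|` lies in `c ++ s` or in `s ++ t`, and in both exactly when it lies in `s`. Hence if `x` and `x ++ p` end in the same
length-`N` block `s`, inserting `p` right after `x` adds `occ (x ++ p) u - occ x u` occurrences of
every `u` of length at most `N`, whatever follows. Iterating, `x ++ pⁿ ++ y` contains
`occ (x ++ y) wⱼ + n * d` occurrences of each `wⱼ`, so all these words lie in `WMIX`, and they are
pairwise distinct because `p ≠ []`.
-/

/-- `occ w u` is the number of occurrences of `u` as a contiguous factor of `w`. -/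
noncomputable def occ {A : Type*} (w u : List A) : ℕ :=
  Nat.card {p : List A × List A // p.1 ++ u ++ p.2 = w}

/-- `suffN N l` is the length-`N` suffix of `l` (all of `l` if `l` is shorter). -/
def suffN {A : Type*} (N : ℕ) (l : List A) : List A := l.drop (l.length - N)

section Occurrences

variable {A : Type*}

theorem finite_factorizations (w u : List A) :
    Finite {p : List A × List A // p.1 ++ u ++ p.2 = w} := by
  refine Set.Finite.to_subtype (s := {p | p.1 ++ u ++ p.2 = w})
    (((List.finite_toSet w.inits).prod (List.finite_toSet w.tails)).subset ?_)
  rintro ⟨a, b⟩ rfl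
  exact ⟨(List.mem_inits _ _).2 ⟨u ++ b, (List.append_assoc a u b).symm⟩,
    (List.mem_tails _ _).2 (List.suffix_append _ _)⟩

instance (u l : List A) : Subsingleton {q : List A // u ++ q = l} :=
  ⟨fun q₁ q₂ => Subtype.ext (List.append_cancel_left (q₁.2.trans q₂.2.symm))⟩

open scoped Classical in
theorem card_append_eq_ite_isPrefix (u l : List A) :
    Nat.card {q : List A // u ++ q = l} = if u <+: l then 1 else 0 := by
  split_ifs with h
  · obtain ⟨q, hq⟩ := h
    exact Nat.card_eq_one_iff_unique.2 ⟨inferInstance, ⟨⟨q, hq⟩⟩⟩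
  · have : IsEmpty {q : List A // u ++ q = l} := ⟨fun q => h ⟨q.1, q.2⟩⟩
    exact Nat.card_of_isEmpty

open scoped Classical in
theorem occ_cons (a : A) (w u : List A) :
    occ (a :: w) u = (if u <+: a :: w then 1 else 0) + occ w u := by
  have := finite_factorizations (a :: w) u
  have := finite_factorizations w u
  let f : {q : List A // u ++ q = a :: w} ⊕ {p : List A × List A // p.1 ++ u ++ p.2 = w} →
      {p : List A × List A // p.1 ++ u ++ p.2 = a :: w} :=
    Sum.elim (fun q => ⟨([], q.1), q.2⟩)
      (fun p => ⟨(a :: p.1.1, p.1.2), by simp [← p.2]⟩)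
  have hf : Function.Bijective f := by
    constructor
    · rintro (⟨q₁, h₁⟩ | ⟨⟨l₁, l₂⟩, h₁⟩) (⟨q₂, h₂⟩ | ⟨⟨m₁, m₂⟩, h₂⟩) h <;> simp_all [f]
    · rintro ⟨⟨_ | ⟨b, l₁⟩, l₂⟩, h⟩
      · exact ⟨Sum.inl ⟨l₂, h⟩, rfl⟩
      · obtain ⟨rfl, hw⟩ : b = a ∧ l₁ ++ u ++ l₂ = w := by simpa using h
        exact ⟨Sum.inr ⟨(l₁, l₂), hw⟩, rfl⟩
  rw [occ, ← Nat.card_congr (Equiv.ofBijective f hf), Nat.card_sum, card_append_eq_ite_isPrefix]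
  rfl

open scoped Classical in
theorem occ_append_append_add_occ (c : List A) {u s : List A} (t : List A)
    (hu : u.length ≤ s.length) :
    occ (c ++ s ++ t) u + occ s u = occ (c ++ s) u + occ (s ++ t) u := by
  induction c with
  | nil => simp [Nat.add_comm]
  | cons a c ih =>
    have hprefix : u <+: a :: (c ++ s ++ t) ↔ u <+: a :: (c ++ s) :=
      List.isPrefix_append_of_length (l₂ := a :: (c ++ s)) (l₃ := t) (by simp; omega)
    rw [List.cons_append, List.cons_append, occ_cons, occ_cons, if_congr hprefix rfl rfl]
    omega

theorem occ_append_append_add_occ_of_isSuffix {x p s u : List A} (hu : u.length ≤ s.length)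
    (hx : s <:+ x) (hxp : s <:+ x ++ p) (t : List A) :
    occ (x ++ p ++ t) u + occ x u = occ (x ++ p) u + occ (x ++ t) u := by
  obtain ⟨c, rfl⟩ := hx
  obtain ⟨c', hc'⟩ := hxp
  have hc := occ_append_append_add_occ c t hu
  have hc'' := occ_append_append_add_occ c' t hu
  rw [hc'] at hc''
  omega

theorem occ_append_flatten_replicate_append {x p s u y : List A} {d : ℕ}
    (hu : u.length ≤ s.length) (hx : s <:+ x) (hxp : s <:+ x ++ p)
    (hd : occ (x ++ p ++ y) u = occ (x ++ y) u + d) (n : ℕ) :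
    occ (x ++ (List.replicate n p).flatten ++ y) u = occ (x ++ y) u + n * d := by
  induction n with
  | zero => simp
  | succ n ih =>
    have hstep := occ_append_append_add_occ_of_isSuffix hu hx hxp
      ((List.replicate n p).flatten ++ y)
    have hfirst := occ_append_append_add_occ_of_isSuffix hu hx hxp y
    simp only [List.replicate_succ, List.flatten_cons, List.append_assoc] at hstep hfirst hd ih ⊢
    rw [Nat.succ_mul]
    omega

theorem append_flatten_replicate_append_injective (x y : List A) {p : List A} (hp : p ≠ []) :
    Function.Injective fun n => x ++ (List.replicate n p).flatten ++ y := by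
  intro m n h
  have hlen := congrArg List.length h
  simp only [List.length_append, List.length_flatten, List.map_replicate, List.sum_replicate,
    smul_eq_mul] at hlen
  exact Nat.eq_of_mul_eq_mul_right (List.length_pos_iff.2 hp) (by omega)

end Occurrences

theorem wmix_pumping_sufficient {A : Type*} {k : ℕ} (ws : Fin k → List A) (N : ℕ)
    (hN : N = Finset.univ.sup fun j => (ws j).length)
    (x p y : List A) (hp : p ≠ [])
    (hmem : ∀ j j', occ (x ++ y) (ws j) = occ (x ++ y) (ws j'))
    (hx : N ≤ x.length)
    (hsuff : suffN N (x ++ p) = suffN N x)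
    (d : ℕ) (hd : ∀ j, occ (x ++ p ++ y) (ws j) = occ (x ++ y) (ws j) + d) :
    (∀ n : ℕ, ∀ j j',
        occ (x ++ (List.replicate n p).flatten ++ y) (ws j) =
          occ (x ++ (List.replicate n p).flatten ++ y) (ws j')) ∧
      {w : List A | ∀ j j', occ w (ws j) = occ w (ws j')}.Infinite := by
  have hlen (j : Fin k) : (ws j).length ≤ (suffN N x).length := by
    have := hN ▸ Finset.le_sup (f := fun j => (ws j).length) (Finset.mem_univ j)
    rw [suffN, List.length_drop]
    omega
  have hxs : suffN N x <:+ x := List.drop_suffix _ _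
  have hxps : suffN N x <:+ x ++ p := hsuff ▸ List.drop_suffix _ _
  have hpumped (n : ℕ) (j j' : Fin k) :
      occ (x ++ (List.replicate n p).flatten ++ y) (ws j) =
        occ (x ++ (List.replicate n p).flatten ++ y) (ws j') := by
    rw [occ_append_flatten_replicate_append (hlen j) hxs hxps (hd j),
      occ_append_flatten_replicate_append (hlen j') hxs hxps (hd j'), hmem j j']
  exact ⟨hpumped, Set.infinite_of_injective_forall_mem
    (append_flatten_replicate_append_injective x y hp) hpumped⟩
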